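/- arXiv:1312.0167 — 3 statements merged into one kernel-verified Lean document; each statement's English description precedes it below -/
import Mathlib

section
/- Let X, Y, Z be Hilbert spaces, let ι : X → Z be an injective compact continuous linear map (a compact embedding of X into Z), and let L : X → Y be a continuous linear operator. Then the following two assertions are equivalent: (i) the range of L is closed in Y and the kernel of L is finite dimensional; (ii) there exists a constant C > 0 such that ‖u‖_X ≤ C(‖L u‖_Y + ‖ι u‖_Z) for all u ∈ X. -/
open Filter Topology

lemma peetre_cauchy_aux {X Z : Type*} [NormedAddCommGroup X] [NormedAddCommGroup Z]
    (v : ℕ → X) (b : ℕ → Z) (a : ℕ → ℝ) (C : ℝ) (hC : 0 < C)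
    (hb : CauchySeq b) (ha : Tendsto a atTop (𝓝 0))
    (h : ∀ m n : ℕ, ‖v m - v n‖ ≤ C * (a m + a n + ‖b m - b n‖)) :
    CauchySeq v := by
  rw [Metric.cauchySeq_iff]
  intro ε hε
  have hδ : 0 < ε / (3 * C) := by positivity
  obtain ⟨N₁, hN₁⟩ := Metric.cauchySeq_iff.1 hb (ε / (3 * C)) hδ
  obtain ⟨N₂, hN₂⟩ := (Metric.tendsto_atTop.1 ha) (ε / (3 * C)) hδ
  refine ⟨max N₁ N₂, fun m hm n hn => ?_⟩
  have h1 := hN₁ m (le_trans (le_max_left _ _) hm) n (le_trans (le_max_left _ _) hn)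
  have h2 := hN₂ m (le_trans (le_max_right _ _) hm)
  have h3 := hN₂ n (le_trans (le_max_right _ _) hn)
  rw [Real.dist_eq, sub_zero] at h2 h3
  have h2' : a m < ε / (3 * C) := lt_of_le_of_lt (le_abs_self _) h2
  have h3' : a n < ε / (3 * C) := lt_of_le_of_lt (le_abs_self _) h3
  have h4 : ‖b m - b n‖ < ε / (3 * C) := by rwa [dist_eq_norm] at h1
  rw [dist_eq_norm]
  calc ‖v m - v n‖ ≤ C * (a m + a n + ‖b m - b n‖) := h m n
    _ < C * (ε / (3 * C) + ε / (3 * C) + ε / (3 * C)) := by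
        apply mul_lt_mul_of_pos_left _ hC
        linarith
    _ = ε := by field_simp; ring

set_option maxHeartbeats 2000000 in
/-- **Peetre's lemma.** Let `X, Y, Z` be Hilbert spaces, `ι : X → Z` an injective compact
continuous linear map, and `L : X → Y` a continuous linear operator. Then the range of `L`
is closed and its kernel is finite dimensional if and only if there is a constant `C > 0`
with `‖u‖ ≤ C (‖L u‖ + ‖ι u‖)` for all `u`. -/
theorem peetre_lemma
    {X Y Z : Type*}
    [NormedAddCommGroup X] [InnerProductSpace ℝ X] [CompleteSpace X]
    [NormedAddCommGroup Y] [InnerProductSpace ℝ Y] [CompleteSpace Y]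
    [NormedAddCommGroup Z] [InnerProductSpace ℝ Z] [CompleteSpace Z]
    (ι : X →L[ℝ] Z) (hι_inj : Function.Injective ι)
    (hι_cpt : IsCompactOperator ι)
    (L : X →L[ℝ] Y) :
    (IsClosed (Set.range L) ∧ FiniteDimensional ℝ (LinearMap.ker (L : X →ₗ[ℝ] Y))) ↔
      ∃ C > (0:ℝ), ∀ u : X, ‖u‖ ≤ C * (‖L u‖ + ‖ι u‖) := by
  constructor
  · rintro ⟨hclosed, hfin⟩
    set K := LinearMap.ker (L : X →ₗ[ℝ] Y) with hK
    haveI : CompleteSpace K := FiniteDimensional.complete ℝ _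
    -- bound on the kernel via ι
    have hker_bound : ∃ c₁ ≥ (1:ℝ), ∀ x ∈ K, ‖x‖ ≤ c₁ * ‖ι x‖ := by
      set f : K →ₗ[ℝ] Z := ι.toLinearMap.domRestrict K with hf
      have hfinj : Function.Injective f := by
        intro a b hab
        exact Subtype.ext (hι_inj hab)
      set e : K ≃ₗ[ℝ] LinearMap.range f := LinearEquiv.ofInjective f hfinj with he
      set g : (LinearMap.range f) →L[ℝ] K := LinearMap.toContinuousLinearMap (e.symm : LinearMap.range f →ₗ[ℝ] K) with hg
      refine ⟨max ‖g‖ 1, le_max_right _ _, ?_⟩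
      intro x hx
      have h1 : (⟨x, hx⟩ : K) = e.symm (e ⟨x, hx⟩) := (e.symm_apply_apply _).symm
      have h2 : ‖(⟨x, hx⟩ : K)‖ ≤ ‖g‖ * ‖e ⟨x, hx⟩‖ := by
        conv_lhs => rw [h1]
        exact g.le_opNorm _
      have h3 : ‖e (⟨x, hx⟩ : K)‖ = ‖ι x‖ := by
        rw [← Submodule.norm_coe]
        congr 1
      have h4 : ‖(⟨x, hx⟩ : K)‖ = ‖x‖ := rfl
      rw [h4, h3] at h2
      calc ‖x‖ ≤ ‖g‖ * ‖ι x‖ := h2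
        _ ≤ max ‖g‖ 1 * ‖ι x‖ := by
            apply mul_le_mul_of_nonneg_right (le_max_left _ _) (norm_nonneg _)
    -- bound on the orthogonal complement via L
    have horth_bound : ∃ c₂ ≥ (1:ℝ), ∀ x ∈ Kᗮ, ‖x‖ ≤ c₂ * ‖L x‖ := by
      set R := LinearMap.range (L : X →ₗ[ℝ] Y) with hR
      have hRclosed : IsClosed (R : Set Y) := by
        rw [hR, LinearMap.coe_range]
        exact hclosed
      haveI : CompleteSpace R := hRclosed.completeSpace_coe
      set L₁ : Kᗮ →L[ℝ] R :=
        (L.comp Kᗮ.subtypeL).codRestrict R (fun x => LinearMap.mem_range_self _ _) with hL₁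
      have hker : LinearMap.ker (L₁ : Kᗮ →ₗ[ℝ] R) = ⊥ := by
        rw [LinearMap.ker_eq_bot']
        intro m hm
        have h1 : L (m : X) = 0 := by
          have := congrArg (Subtype.val) hm
          exact this
        have h2 : (m : X) ∈ K := h1
        have := (Submodule.disjoint_def.1 K.orthogonal_disjoint) (m : X) h2 m.2
        exact Subtype.ext this
      have hrange : LinearMap.range (L₁ : Kᗮ →ₗ[ℝ] R) = ⊤ := by
        rw [LinearMap.range_eq_top]
        rintro ⟨y, hy⟩
        obtain ⟨x, hxy⟩ := hy
        obtain ⟨kk, hkk, w, hw, hxd⟩ := K.exists_add_mem_mem_orthogonal x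
        refine ⟨⟨w, hw⟩, ?_⟩
        apply Subtype.ext
        have hLk : L kk = 0 := hkk
        simp only [hL₁, ContinuousLinearMap.coe_codRestrict_apply,
          ContinuousLinearMap.comp_apply, Submodule.subtypeL_apply]
        show L w = y
        rw [← hxy]
        show L w = L x
        rw [hxd, map_add, hLk, zero_add]
      set E := ContinuousLinearEquiv.ofBijective L₁ hker hrange with hE
      refine ⟨max ‖(E.symm : R →L[ℝ] Kᗮ)‖ 1, le_max_right _ _, ?_⟩
      intro x hx
      have h1 : (⟨x, hx⟩ : Kᗮ) = E.symm (E ⟨x, hx⟩) := (E.symm_apply_apply _).symm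
      have h2 : ‖(⟨x, hx⟩ : Kᗮ)‖ ≤ ‖(E.symm : R →L[ℝ] Kᗮ)‖ * ‖E ⟨x, hx⟩‖ := by
        conv_lhs => rw [h1]
        exact (E.symm : R →L[ℝ] Kᗮ).le_opNorm _
      have h3 : ‖E (⟨x, hx⟩ : Kᗮ)‖ = ‖L x‖ := by
        rw [← Submodule.norm_coe]
        congr 1
      have h4 : ‖(⟨x, hx⟩ : Kᗮ)‖ = ‖x‖ := rfl
      rw [h4, h3] at h2
      calc ‖x‖ ≤ ‖(E.symm : R →L[ℝ] Kᗮ)‖ * ‖L x‖ := h2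
        _ ≤ _ := mul_le_mul_of_nonneg_right (le_max_left _ _) (norm_nonneg _)
    obtain ⟨c₁, hc₁, hb₁⟩ := hker_bound
    obtain ⟨c₂, hc₂, hb₂⟩ := horth_bound
    refine ⟨c₂ + c₁ * ‖ι‖ * c₂ + c₁, by positivity, ?_⟩
    intro u
    obtain ⟨kk, hkk, w, hw, hud⟩ := K.exists_add_mem_mem_orthogonal u
    have hLw : L w = L u := by
      have hLk : L kk = 0 := hkk
      rw [hud, map_add, hLk, zero_add]
    have h1 : ‖w‖ ≤ c₂ * ‖L u‖ := by rw [← hLw]; exact hb₂ w hw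
    have h2 : ‖kk‖ ≤ c₁ * ‖ι u‖ + c₁ * ‖ι‖ * (c₂ * ‖L u‖) := by
      have := hb₁ kk hkk
      have hik : ι kk = ι u - ι w := by rw [hud, map_add]; abel
      have h3 : ‖ι kk‖ ≤ ‖ι u‖ + ‖ι‖ * ‖w‖ := by
        rw [hik]
        calc ‖ι u - ι w‖ ≤ ‖ι u‖ + ‖ι w‖ := norm_sub_le _ _
          _ ≤ ‖ι u‖ + ‖ι‖ * ‖w‖ := by
              have := ι.le_opNorm w
              linarith
      have hw' : ‖ι‖ * ‖w‖ ≤ ‖ι‖ * (c₂ * ‖L u‖) :=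
        mul_le_mul_of_nonneg_left h1 (norm_nonneg _)
      calc ‖kk‖ ≤ c₁ * ‖ι kk‖ := this
        _ ≤ c₁ * (‖ι u‖ + ‖ι‖ * (c₂ * ‖L u‖)) := by
            apply mul_le_mul_of_nonneg_left _ (by linarith)
            linarith
        _ = c₁ * ‖ι u‖ + c₁ * ‖ι‖ * (c₂ * ‖L u‖) := by ring
    have h0 : ‖u‖ ≤ ‖kk‖ + ‖w‖ := by rw [hud]; exact norm_add_le _ _
    have hLnn : (0:ℝ) ≤ ‖L u‖ := norm_nonneg _
    have hinn : (0:ℝ) ≤ ‖ι u‖ := norm_nonneg _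
    have hιnn : (0:ℝ) ≤ ‖ι‖ := norm_nonneg _
    nlinarith [mul_nonneg (le_trans zero_le_one hc₁) hLnn,
      mul_nonneg (le_trans zero_le_one hc₂) hinn,
      mul_nonneg (mul_nonneg (mul_nonneg (le_trans zero_le_one hc₁) hιnn) (le_trans zero_le_one hc₂)) hinn]
  · rintro ⟨C, hC, hest⟩
    set K := LinearMap.ker (L : X →ₗ[ℝ] Y) with hK
    have hKclosed : IsClosed (K : Set X) := ContinuousLinearMap.isClosed_ker L
    have hι_cpt' : IsCompactOperator (⇑(ι.toLinearMap)) := hι_cpt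
    have hTcpt : IsCompact (closure (ι '' Metric.closedBall 0 1)) :=
      hι_cpt'.isCompact_closure_image_closedBall (𝕜₁ := ℝ) 1
    -- Step 1 : kernel is finite dimensional
    have hfin : FiniteDimensional ℝ K := by
      apply FiniteDimensional.of_isCompact_closedBall₀ ℝ (r := 1) one_pos
      apply IsSeqCompact.isCompact
      intro u hu
      have hx : ∀ n, ι ((u n : X)) ∈ closure (ι '' Metric.closedBall 0 1) := by
        intro n
        apply subset_closure
        exact Set.mem_image_of_mem _ (by
          have := hu n
          simp only [Metric.mem_closedBall, dist_zero_right] at this ⊢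
          rwa [Submodule.norm_coe])
      obtain ⟨z, -, φ, hφ, hz⟩ := hTcpt.tendsto_subseq hx
      have hcb : CauchySeq (fun n => ι ((u (φ n) : X))) := hz.cauchySeq
      have hcv : CauchySeq (fun n => (u (φ n) : X)) := by
        apply peetre_cauchy_aux _ (fun n => ι ((u (φ n) : X))) (fun _ => 0) C hC hcb
          tendsto_const_nhds
        intro m n
        have h0 : ∀ x : ↥K, L (x : X) = 0 := fun x => x.2
        calc ‖(u (φ m) : X) - (u (φ n) : X)‖
            ≤ C * (‖L ((u (φ m) : X) - (u (φ n) : X))‖ + ‖ι ((u (φ m) : X) - (u (φ n) : X))‖) :=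
              hest _
          _ = C * (0 + 0 + ‖ι ((u (φ m) : X)) - ι ((u (φ n) : X))‖) := by
              rw [map_sub, map_sub, h0, h0, sub_zero, norm_zero]; ring_nf
      obtain ⟨xl, hxl⟩ := cauchySeq_tendsto_of_complete hcv
      have hmem : xl ∈ K := hKclosed.mem_of_tendsto hxl (Eventually.of_forall fun n => (u (φ n)).2)
      refine ⟨⟨xl, hmem⟩, ?_, φ, hφ, ?_⟩
      · simp only [Metric.mem_closedBall, dist_zero_right]
        apply le_of_tendsto hxl.norm
        filter_upwards with n
        have := hu (φ n)
        simp only [Metric.mem_closedBall, dist_zero_right] at this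
        rwa [Submodule.norm_coe]
      · exact tendsto_subtype_rng.2 hxl
    refine ⟨?_, hfin⟩
    -- Step 2 : L is bounded below on Kᗮ
    have hbb : ∃ c > (0:ℝ), ∀ w ∈ Kᗮ, ‖w‖ ≤ c * ‖L w‖ := by
      by_contra hcon
      push_neg at hcon
      have hsel : ∀ n : ℕ, ∃ w ∈ Kᗮ, ‖w‖ > (n + 1 : ℝ) * ‖L w‖ := by
        intro n
        obtain ⟨w, hw, hw'⟩ := hcon (n + 1 : ℝ) (by positivity)
        exact ⟨w, hw, hw'⟩
      choose w hwmem hwlt using hsel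
      have hwne : ∀ n, w n ≠ 0 := by
        intro n h0
        have := hwlt n
        rw [h0] at this
        simp at this
      set v : ℕ → X := fun n => ‖w n‖⁻¹ • w n with hv
      have hvnorm : ∀ n, ‖v n‖ = 1 := fun n => norm_smul_inv_norm (hwne n)
      have hvmem : ∀ n, v n ∈ Kᗮ := fun n => Submodule.smul_mem _ _ (hwmem n)
      have hvL : ∀ n, ‖L (v n)‖ ≤ 1 / (n + 1 : ℝ) := by
        intro n
        have hw0 : (0:ℝ) < ‖w n‖ := norm_pos_iff.2 (hwne n)
        have hn1 : (0:ℝ) < (n:ℝ) + 1 := by positivity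
        have hlt := hwlt n
        simp only [hv, map_smul, norm_smul, norm_inv, norm_norm]
        rw [inv_mul_le_iff₀ hw0, mul_one_div, le_div_iff₀ hn1]
        nlinarith
      have hvL0 : Tendsto (fun n => ‖L (v n)‖) atTop (𝓝 0) := by
        apply squeeze_zero (fun n => norm_nonneg _) hvL
        exact tendsto_one_div_add_atTop_nhds_zero_nat
      have hx : ∀ n, ι (v n) ∈ closure (ι '' Metric.closedBall 0 1) := by
        intro n
        apply subset_closure
        exact Set.mem_image_of_mem _ (by
          simp only [Metric.mem_closedBall, dist_zero_right, hvnorm n]; norm_num)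
      obtain ⟨z, -, φ, hφ, hz⟩ := hTcpt.tendsto_subseq hx
      have hcb : CauchySeq (fun n => ι (v (φ n))) := hz.cauchySeq
      have hcv : CauchySeq (fun n => v (φ n)) := by
        apply peetre_cauchy_aux _ (fun n => ι (v (φ n))) (fun n => ‖L (v (φ n))‖) C hC hcb
          (hvL0.comp hφ.tendsto_atTop)
        intro m n
        calc ‖v (φ m) - v (φ n)‖
            ≤ C * (‖L (v (φ m) - v (φ n))‖ + ‖ι (v (φ m) - v (φ n))‖) := hest _
          _ ≤ C * (‖L (v (φ m))‖ + ‖L (v (φ n))‖ + ‖ι (v (φ m)) - ι (v (φ n))‖) := by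
              apply mul_le_mul_of_nonneg_left _ (le_of_lt hC)
              rw [map_sub, map_sub]
              have := norm_sub_le (L (v (φ m))) (L (v (φ n)))
              linarith
      obtain ⟨vl, hvl⟩ := cauchySeq_tendsto_of_complete hcv
      have hvlperp : vl ∈ Kᗮ :=
        K.isClosed_orthogonal.mem_of_tendsto hvl (Eventually.of_forall fun n => hvmem (φ n))
      have hvlK : vl ∈ K := by
        have h1 : Tendsto (fun n => L (v (φ n))) atTop (𝓝 (L vl)) :=
          (L.continuous.tendsto vl).comp hvl
        have h2 : Tendsto (fun n => L (v (φ n))) atTop (𝓝 0) := by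
          rw [tendsto_zero_iff_norm_tendsto_zero]
          exact hvL0.comp hφ.tendsto_atTop
        have : L vl = 0 := tendsto_nhds_unique h1 h2
        exact this
      have hvl0 : vl = 0 := (Submodule.disjoint_def.1 K.orthogonal_disjoint) vl hvlK hvlperp
      have hvl1 : ‖vl‖ = 1 := by
        have := hvl.norm
        simp only [hvnorm] at this
        exact tendsto_nhds_unique this tendsto_const_nhds
      rw [hvl0, norm_zero] at hvl1
      norm_num at hvl1
    -- Step 3 : range is closed
    obtain ⟨c, hc, hcb⟩ := hbb
    haveI : CompleteSpace K := FiniteDimensional.complete ℝ _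
    apply IsSeqClosed.isClosed
    intro y p hy hyp
    choose x hx using hy
    have hdec : ∀ n, ∃ k ∈ K, ∃ wn ∈ Kᗮ, x n = k + wn := fun n =>
      K.exists_add_mem_mem_orthogonal (x n)
    choose k hk wv hw hxd using hdec
    have hLw : ∀ n, L (wv n) = y n := by
      intro n
      have : L (x n) = L (k n) + L (wv n) := by rw [hxd n, map_add]
      have hk0 : L (k n) = 0 := hk n
      rw [← hx n, this, hk0, zero_add]
    have hcw : CauchySeq wv := by
      apply peetre_cauchy_aux wv y (fun _ => 0) c hc hyp.cauchySeq tendsto_const_nhds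
      intro m n
      have hmem : wv m - wv n ∈ Kᗮ := Submodule.sub_mem _ (hw m) (hw n)
      calc ‖wv m - wv n‖ ≤ c * ‖L (wv m - wv n)‖ := hcb _ hmem
        _ = c * (0 + 0 + ‖y m - y n‖) := by rw [map_sub, hLw, hLw]; ring_nf
    obtain ⟨wl, hwl⟩ := cauchySeq_tendsto_of_complete hcw
    refine ⟨wl, ?_⟩
    have h1 : Tendsto (fun n => L (wv n)) atTop (𝓝 (L wl)) := (L.continuous.tendsto wl).comp hwl
    simp only [hLw] at h1
    exact tendsto_nhds_unique h1 hyp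
end

section
/- Let a > 0, R ∈ ℝ, and μ ∈ ℂ with Im μ > 0 and |μ| < 2π/a; for ℓ ∈ ℤ \ {0} let √(4π²ℓ²/a² − μ²) denote the principal square root (which then has positive real part). Let c : ℤ → ℂ be finitely supported and define u(x, y) = c(0) e^{iμ(x−R)} + Σ_{ℓ ≠ 0} c(ℓ) e^{−√(4π²ℓ²/a² − μ²)(x − R)} e^{2πiℓ y/a}. Then: (i) −∂_x² u − ∂_y² u = μ² u on [R, ∞) × ℝ; (ii) u(R, y) = Σ_{ℓ ∈ ℤ} c(ℓ) e^{2πiℓ y/a} for all y; (iii) u is bounded on [R, ∞) × ℝ; and (iv) ∂_x u(R, y) = iμ c(0) − Σ_{ℓ ≠ 0} √(4π²ℓ²/a² − μ²) c(ℓ) e^{2πiℓ y/a} for all y. -/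
open Real

/-- The mixed partial derivative `∂ₓᵖ ∂_yᑫ u` of a function `u : ℝ → ℝ → ℂ`. -/
noncomputable def mixedPartialDeriv (p q : ℕ) (u : ℝ → ℝ → ℂ) (x y : ℝ) : ℂ :=
  iteratedDeriv p (fun s => iteratedDeriv q (u s) y) x

/-- The principal square root `√(4π²ℓ²/a² − μ²)`. -/
noncomputable def sqRoot (a : ℝ) (μ : ℂ) (ℓ : ℤ) : ℂ :=
  (4 * (π:ℂ) ^ 2 * (ℓ:ℂ) ^ 2 / (a:ℂ) ^ 2 - μ ^ 2) ^ ((1:ℂ) / 2)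

/-- The separation-of-variables solution on the semi-infinite cylinder `[R,∞) × O`:
`u(x,y) = c₀ e^{iμ(x−R)} + Σ_{ℓ≠0} c_ℓ e^{−√(4π²ℓ²/a²−μ²)(x−R)} e^{2πiℓy/a}`. -/
noncomputable def sepSol (a R : ℝ) (μ : ℂ) (c : ℤ → ℂ) (x y : ℝ) : ℂ :=
  c 0 * Complex.exp (Complex.I * μ * ((x:ℂ) - (R:ℂ))) +
    ∑' ℓ : ℤ, if ℓ ≠ 0 then
      c ℓ * Complex.exp (-(sqRoot a μ ℓ) * ((x:ℂ) - (R:ℂ))) *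
        Complex.exp (2 * (π:ℂ) * Complex.I * (ℓ:ℂ) * (y:ℂ) / (a:ℂ))
    else 0

/-! ### Auxiliary machinery -/

/-- canonical exponential term -/
noncomputable def eTerm (A b e : ℂ) (t : ℝ) : ℂ := A * Complex.exp (b * (t:ℂ) + e)

lemma eTerm_hasDerivAt (A b e : ℂ) (t : ℝ) :
    HasDerivAt (fun t => eTerm A b e t) (eTerm (b * A) b e t) t := by
  unfold eTerm
  have h1 : HasDerivAt (fun t : ℝ => b * (t:ℂ) + e) b t := by
    simpa using ((Complex.ofRealCLM.hasDerivAt (x := t)).const_mul b).add_const e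
  have h2 := h1.cexp.const_mul A
  exact h2.congr_deriv (by ring)

lemma model_hasDerivAt (G : Finset ℤ) (A b e : ℤ → ℂ) (t : ℝ) :
    HasDerivAt (fun t => ∑ ℓ ∈ G, eTerm (A ℓ) (b ℓ) (e ℓ) t)
      (∑ ℓ ∈ G, eTerm (b ℓ * A ℓ) (b ℓ) (e ℓ) t) t :=
  HasDerivAt.fun_sum fun ℓ _ => eTerm_hasDerivAt (A ℓ) (b ℓ) (e ℓ) t

lemma model_deriv (G : Finset ℤ) (A b e : ℤ → ℂ) :
    deriv (fun t => ∑ ℓ ∈ G, eTerm (A ℓ) (b ℓ) (e ℓ) t)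
      = fun t => ∑ ℓ ∈ G, eTerm (b ℓ * A ℓ) (b ℓ) (e ℓ) t :=
  funext fun t => (model_hasDerivAt G A b e t).deriv

lemma model_iteratedDeriv_one (G : Finset ℤ) (A b e : ℤ → ℂ) (x : ℝ) :
    iteratedDeriv 1 (fun t => ∑ ℓ ∈ G, eTerm (A ℓ) (b ℓ) (e ℓ) t) x
      = ∑ ℓ ∈ G, eTerm (b ℓ * A ℓ) (b ℓ) (e ℓ) x := by
  rw [iteratedDeriv_one, model_deriv]

lemma model_iteratedDeriv_two (G : Finset ℤ) (A b e : ℤ → ℂ) (x : ℝ) :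
    iteratedDeriv 2 (fun t => ∑ ℓ ∈ G, eTerm (A ℓ) (b ℓ) (e ℓ) t) x
      = ∑ ℓ ∈ G, eTerm (b ℓ * (b ℓ * A ℓ)) (b ℓ) (e ℓ) x := by
  rw [show (2:ℕ) = 1 + 1 from rfl, iteratedDeriv_succ, iteratedDeriv_one, model_deriv,
    model_deriv]

lemma sqrt_re_pos {z : ℂ} (hz : 0 < z.re) : 0 < (z ^ ((1:ℂ)/2)).re := by
  have hz0 : z ≠ 0 := by intro h; simp [h] at hz
  rw [Complex.cpow_def_of_ne_zero hz0, Complex.exp_re]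
  apply mul_pos (Real.exp_pos _)
  apply Real.cos_pos_of_mem_Ioo
  have harg : |z.arg| < π / 2 := Complex.abs_arg_lt_pi_div_two_iff.mpr (Or.inl hz)
  have him : (Complex.log z * ((1:ℂ)/2)).im = z.arg / 2 := by
    simp [Complex.mul_im, Complex.log_im]
    ring
  rw [him]
  have := abs_lt.mp harg
  constructor <;> [linarith [pi_pos]; linarith [pi_pos]]

lemma sq_half_cpow (z : ℂ) : (z ^ ((1:ℂ)/2)) ^ 2 = z := by
  rw [one_div]
  exact_mod_cast Complex.cpow_nat_inv_pow z two_ne_zero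

lemma base_re_pos (a : ℝ) (ha : 0 < a) (μ : ℂ) (hμ' : ‖μ‖ < 2 * π / a)
    {ℓ : ℤ} (hℓ : ℓ ≠ 0) :
    0 < (4 * (π:ℂ) ^ 2 * (ℓ:ℂ) ^ 2 / (a:ℂ) ^ 2 - μ ^ 2).re := by
  have hcast : (4 * (π:ℂ) ^ 2 * (ℓ:ℂ) ^ 2 / (a:ℂ) ^ 2)
      = ((4 * π ^ 2 * (ℓ:ℝ) ^ 2 / a ^ 2 : ℝ) : ℂ) := by push_cast; ring
  rw [Complex.sub_re, hcast, Complex.ofReal_re]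
  have h1 : (1:ℝ) ≤ (ℓ:ℝ) ^ 2 := by
    have := Int.one_le_abs hℓ
    have h2 : (1:ℝ) ≤ |(ℓ:ℝ)| := by exact_mod_cast this
    nlinarith [abs_nonneg (ℓ:ℝ), sq_abs (ℓ:ℝ)]
  have hre : (μ ^ 2).re ≤ ‖μ‖ ^ 2 := by
    calc (μ ^ 2).re ≤ ‖μ ^ 2‖ := Complex.re_le_norm _
    _ = ‖μ‖ ^ 2 := by rw [norm_pow]
  have hlt : ‖μ‖ ^ 2 < (2 * π / a) ^ 2 := by
    have h0 : 0 ≤ ‖μ‖ := norm_nonneg μ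
    nlinarith
  have hle : (2 * π / a) ^ 2 ≤ 4 * π ^ 2 * (ℓ:ℝ) ^ 2 / a ^ 2 := by
    rw [div_pow, div_le_div_iff₀ (by positivity) (by positivity)]
    have hp : (0:ℝ) < π ^ 2 * a ^ 2 := by positivity
    nlinarith [hp]
  linarith

/-- coefficients for the `x`-direction model -/
noncomputable def coAx (a : ℝ) (c : ℤ → ℂ) (y : ℝ) (ℓ : ℤ) : ℂ :=
  if ℓ = 0 then c 0
  else c ℓ * Complex.exp (2 * (π:ℂ) * Complex.I * (ℓ:ℂ) * (y:ℂ) / (a:ℂ))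

noncomputable def coBx (a : ℝ) (μ : ℂ) (ℓ : ℤ) : ℂ :=
  if ℓ = 0 then Complex.I * μ else -(sqRoot a μ ℓ)

noncomputable def coEx (a R : ℝ) (μ : ℂ) (ℓ : ℤ) : ℂ :=
  if ℓ = 0 then -(Complex.I * μ * (R:ℂ)) else sqRoot a μ ℓ * (R:ℂ)

/-- coefficients for the `y`-direction model -/
noncomputable def coAy (a R : ℝ) (μ : ℂ) (c : ℤ → ℂ) (x : ℝ) (ℓ : ℤ) : ℂ :=
  if ℓ = 0 then c 0 * Complex.exp (Complex.I * μ * ((x:ℂ) - (R:ℂ)))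
  else c ℓ * Complex.exp (-(sqRoot a μ ℓ) * ((x:ℂ) - (R:ℂ)))

noncomputable def coBy (a : ℝ) (ℓ : ℤ) : ℂ :=
  if ℓ = 0 then 0 else 2 * (π:ℂ) * Complex.I * (ℓ:ℂ) / (a:ℂ)

lemma coAx_zero (a : ℝ) (c : ℤ → ℂ) (y : ℝ) : coAx a c y 0 = c 0 := by simp [coAx]
lemma coBx_zero (a : ℝ) (μ : ℂ) : coBx a μ 0 = Complex.I * μ := by simp [coBx]
lemma coEx_zero (a R : ℝ) (μ : ℂ) : coEx a R μ 0 = -(Complex.I * μ * (R:ℂ)) := by simp [coEx]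
lemma coAy_zero (a R : ℝ) (μ : ℂ) (c : ℤ → ℂ) (x : ℝ) :
    coAy a R μ c x 0 = c 0 * Complex.exp (Complex.I * μ * ((x:ℂ) - (R:ℂ))) := by simp [coAy]
lemma coBy_zero (a : ℝ) : coBy a 0 = 0 := by simp [coBy]

section Reps

variable (a R : ℝ) (μ : ℂ) (c : ℤ → ℂ) (hc : (Function.support c).Finite)

lemma support_zero {ℓ : ℤ} (h : ℓ ∉ hc.toFinset) : c ℓ = 0 := by
  by_contra h'
  exact h (hc.mem_toFinset.mpr h')

lemma sepSol_finsum (x y : ℝ) :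
    sepSol a R μ c x y =
      c 0 * Complex.exp (Complex.I * μ * ((x:ℂ) - (R:ℂ))) +
      ∑ ℓ ∈ hc.toFinset, (if ℓ ≠ 0 then
        c ℓ * Complex.exp (-(sqRoot a μ ℓ) * ((x:ℂ) - (R:ℂ))) *
          Complex.exp (2 * (π:ℂ) * Complex.I * (ℓ:ℂ) * (y:ℂ) / (a:ℂ)) else 0) := by
  unfold sepSol
  congr 1
  refine tsum_eq_sum ?_
  intro ℓ hℓ
  simp [support_zero c hc hℓ]

lemma sepSol_x_rep (y t : ℝ) :
    sepSol a R μ c t y =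
      ∑ ℓ ∈ insert 0 hc.toFinset,
        eTerm (coAx a c y ℓ) (coBx a μ ℓ) (coEx a R μ ℓ) t := by
  rw [sepSol_finsum a R μ c hc,
    ← Finset.add_sum_erase _ (fun ℓ => eTerm (coAx a c y ℓ) (coBx a μ ℓ) (coEx a R μ ℓ) t)
      (Finset.mem_insert_self 0 hc.toFinset),
    Finset.erase_insert_eq_erase]
  congr 1
  · rw [eTerm, coAx_zero, coBx_zero, coEx_zero,
      show Complex.I * μ * (t:ℂ) + -(Complex.I * μ * (R:ℂ))
        = Complex.I * μ * ((t:ℂ) - (R:ℂ)) by ring]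
  · rw [← Finset.sum_erase hc.toFinset (a := 0)
      (f := fun ℓ => if ℓ ≠ 0 then
        c ℓ * Complex.exp (-(sqRoot a μ ℓ) * ((t:ℂ) - (R:ℂ))) *
          Complex.exp (2 * (π:ℂ) * Complex.I * (ℓ:ℂ) * (y:ℂ) / (a:ℂ)) else 0) (by simp)]
    refine Finset.sum_congr rfl ?_
    intro ℓ hℓ
    have hℓ0 : ℓ ≠ 0 := (Finset.mem_erase.mp hℓ).1
    simp only [coAx, coBx, coEx, eTerm, if_neg hℓ0, if_pos hℓ0]
    rw [show -(sqRoot a μ ℓ) * (t:ℂ) + sqRoot a μ ℓ * (R:ℂ)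
        = -(sqRoot a μ ℓ) * ((t:ℂ) - (R:ℂ)) by ring]
    ring

lemma sepSol_y_rep (x t : ℝ) :
    sepSol a R μ c x t =
      ∑ ℓ ∈ insert 0 hc.toFinset,
        eTerm (coAy a R μ c x ℓ) (coBy a ℓ) 0 t := by
  rw [sepSol_finsum a R μ c hc,
    ← Finset.add_sum_erase _ (fun ℓ => eTerm (coAy a R μ c x ℓ) (coBy a ℓ) 0 t)
      (Finset.mem_insert_self 0 hc.toFinset),
    Finset.erase_insert_eq_erase]
  congr 1
  · rw [eTerm, coAy_zero, coBy_zero,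
      show (0:ℂ) * (t:ℂ) + 0 = 0 by ring, Complex.exp_zero, mul_one]
  · rw [← Finset.sum_erase hc.toFinset (a := 0)
      (f := fun ℓ => if ℓ ≠ 0 then
        c ℓ * Complex.exp (-(sqRoot a μ ℓ) * ((x:ℂ) - (R:ℂ))) *
          Complex.exp (2 * (π:ℂ) * Complex.I * (ℓ:ℂ) * (t:ℂ) / (a:ℂ)) else 0) (by simp)]
    refine Finset.sum_congr rfl ?_
    intro ℓ hℓ
    have hℓ0 : ℓ ≠ 0 := (Finset.mem_erase.mp hℓ).1
    simp only [coAy, coBy, eTerm, if_neg hℓ0, if_pos hℓ0]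
    rw [show 2 * (π:ℂ) * Complex.I * (ℓ:ℂ) / (a:ℂ) * (t:ℂ) + 0
        = 2 * (π:ℂ) * Complex.I * (ℓ:ℂ) * (t:ℂ) / (a:ℂ) by ring]

end Reps

/-- Separation of variables on a semi-infinite flat cylinder of circumference `a`: for
`Im μ > 0`, `|μ| < 2π/a` and finitely supported coefficients `c`, the square roots have
positive real part, and `u = sepSol a R μ c` solves the Helmholtz equation
`−∂ₓ²u − ∂_y²u = μ²u` on `[R,∞) × ℝ`, has boundary values `Σ c_ℓ e^{2πiℓy/a}` at `x = R`,
is bounded, and its normal derivative at `x = R` is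
`iμc₀ − Σ_{ℓ≠0} √(4π²ℓ²/a²−μ²) c_ℓ e^{2πiℓy/a}`. -/
theorem semi_infinite_cylinder_separation_of_variables
    (a R : ℝ) (ha : 0 < a) (μ : ℂ) (hμ : 0 < μ.im) (hμ' : ‖μ‖ < 2 * π / a)
    (c : ℤ → ℂ) (hc : (Function.support c).Finite) :
    (∀ ℓ : ℤ, ℓ ≠ 0 → 0 < (sqRoot a μ ℓ).re) ∧
    (∀ x y : ℝ, R ≤ x →
      -(mixedPartialDeriv 2 0 (sepSol a R μ c) x y)
        - mixedPartialDeriv 0 2 (sepSol a R μ c) x y = μ ^ 2 * sepSol a R μ c x y) ∧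
    (∀ y : ℝ, sepSol a R μ c R y =
      ∑' ℓ : ℤ, c ℓ * Complex.exp (2 * (π:ℂ) * Complex.I * (ℓ:ℂ) * (y:ℂ) / (a:ℂ))) ∧
    (∃ M : ℝ, ∀ x y : ℝ, R ≤ x → ‖sepSol a R μ c x y‖ ≤ M) ∧
    (∀ y : ℝ, mixedPartialDeriv 1 0 (sepSol a R μ c) R y =
      Complex.I * μ * c 0 - ∑' ℓ : ℤ, if ℓ ≠ 0 then
        sqRoot a μ ℓ * c ℓ * Complex.exp (2 * (π:ℂ) * Complex.I * (ℓ:ℂ) * (y:ℂ) / (a:ℂ))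
      else 0) := by
  classical
  have hsre : ∀ ℓ : ℤ, ℓ ≠ 0 → 0 < (sqRoot a μ ℓ).re := fun ℓ hℓ =>
    sqrt_re_pos (base_re_pos a ha μ hμ' hℓ)
  have hs2 : ∀ ℓ : ℤ, (sqRoot a μ ℓ) ^ 2
      = 4 * (π:ℂ) ^ 2 * (ℓ:ℂ) ^ 2 / (a:ℂ) ^ 2 - μ ^ 2 := fun ℓ => sq_half_cpow _
  have hd2 : ∀ ℓ : ℤ, (2 * (π:ℂ) * Complex.I * (ℓ:ℂ) / (a:ℂ)) ^ 2
      = -(4 * (π:ℂ) ^ 2 * (ℓ:ℂ) ^ 2 / (a:ℂ) ^ 2) := fun ℓ => by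
    linear_combination (4 * (π:ℂ) ^ 2 * (ℓ:ℂ) ^ 2 / (a:ℂ) ^ 2) * Complex.I_sq
  refine ⟨hsre, ?_, ?_, ?_, ?_⟩
  · -- Helmholtz
    intro x y hx
    have hfx : (fun s => sepSol a R μ c s y)
        = fun t => ∑ ℓ ∈ insert 0 hc.toFinset,
            eTerm (coAx a c y ℓ) (coBx a μ ℓ) (coEx a R μ ℓ) t :=
      funext fun t => sepSol_x_rep a R μ c hc y t
    have hfy : sepSol a R μ c x
        = fun t => ∑ ℓ ∈ insert 0 hc.toFinset,
            eTerm (coAy a R μ c x ℓ) (coBy a ℓ) 0 t :=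
      funext fun t => sepSol_y_rep a R μ c hc x t
    simp only [mixedPartialDeriv, iteratedDeriv_zero]
    rw [hfx, hfy, model_iteratedDeriv_two, model_iteratedDeriv_two]
    beta_reduce
    rw [Finset.mul_sum, ← Finset.sum_neg_distrib, ← Finset.sum_sub_distrib]
    refine Finset.sum_congr rfl ?_
    intro ℓ _
    by_cases h0 : ℓ = 0
    · subst h0
      simp only [eTerm, coAx_zero, coBx_zero, coEx_zero, coAy_zero, coBy_zero]
      rw [show (0:ℂ) * (y:ℂ) + 0 = 0 by ring, Complex.exp_zero,
        show Complex.I * μ * (x:ℂ) + -(Complex.I * μ * (R:ℂ))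
          = Complex.I * μ * ((x:ℂ) - (R:ℂ)) by ring]
      linear_combination (-(μ ^ 2 * c 0 *
        Complex.exp (Complex.I * μ * ((x:ℂ) - (R:ℂ))))) * Complex.I_sq
    · simp only [coAx, coBx, coEx, coAy, coBy, eTerm, if_neg h0]
      rw [show -(sqRoot a μ ℓ) * (x:ℂ) + sqRoot a μ ℓ * (R:ℂ)
          = -(sqRoot a μ ℓ) * ((x:ℂ) - (R:ℂ)) by ring,
        show 2 * (π:ℂ) * Complex.I * (ℓ:ℂ) / (a:ℂ) * (y:ℂ) + 0
          = 2 * (π:ℂ) * Complex.I * (ℓ:ℂ) * (y:ℂ) / (a:ℂ) by ring]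
      linear_combination
        (-(c ℓ * Complex.exp (2 * (π:ℂ) * Complex.I * (ℓ:ℂ) * (y:ℂ) / (a:ℂ)) *
            Complex.exp (-(sqRoot a μ ℓ) * ((x:ℂ) - (R:ℂ))))) * hs2 ℓ +
        (-(c ℓ * Complex.exp (-(sqRoot a μ ℓ) * ((x:ℂ) - (R:ℂ))) *
            Complex.exp (2 * (π:ℂ) * Complex.I * (ℓ:ℂ) * (y:ℂ) / (a:ℂ)))) * hd2 ℓ
  · -- boundary value
    intro y
    rw [sepSol_x_rep a R μ c hc y R,
      tsum_eq_sum (s := insert 0 hc.toFinset) (by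
        intro ℓ hℓ
        have : ℓ ∉ hc.toFinset := fun h => hℓ (Finset.mem_insert_of_mem h)
        simp [support_zero c hc this])]
    refine Finset.sum_congr rfl ?_
    intro ℓ _
    by_cases h0 : ℓ = 0
    · subst h0
      simp only [eTerm, coAx_zero, coBx_zero, coEx_zero]
      rw [show Complex.I * μ * (R:ℂ) + -(Complex.I * μ * (R:ℂ)) = 0 by ring,
        Complex.exp_zero, mul_one]
      norm_num
    · simp only [coAx, coBx, coEx, eTerm, if_neg h0]
      rw [show -(sqRoot a μ ℓ) * (R:ℂ) + sqRoot a μ ℓ * (R:ℂ) = 0 by ring,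
        Complex.exp_zero, mul_one]
  · -- boundedness
    refine ⟨‖c 0‖ + ∑ ℓ ∈ hc.toFinset, ‖c ℓ‖, ?_⟩
    intro x y hx
    rw [sepSol_finsum a R μ c hc]
    refine (norm_add_le _ _).trans (add_le_add ?_ ?_)
    · rw [norm_mul]
      have h1 : ‖Complex.exp (Complex.I * μ * ((x:ℂ) - (R:ℂ)))‖ ≤ 1 := by
        rw [Complex.norm_exp, Real.exp_le_one_iff]
        have : Complex.I * μ * ((x:ℂ) - (R:ℂ)) = Complex.I * μ * (((x - R : ℝ)):ℂ) := by
          push_cast; ring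
        rw [this, Complex.mul_re, Complex.ofReal_re, Complex.ofReal_im, mul_zero, sub_zero]
        have hre : (Complex.I * μ).re = -μ.im := by
          simp [Complex.mul_re]
        rw [hre]
        nlinarith
      calc ‖c 0‖ * ‖Complex.exp (Complex.I * μ * ((x:ℂ) - (R:ℂ)))‖
          ≤ ‖c 0‖ * 1 := by gcongr
        _ = ‖c 0‖ := mul_one _
    · refine (norm_sum_le _ _).trans (Finset.sum_le_sum ?_)
      intro ℓ _
      by_cases h0 : ℓ = 0
      · simp [h0]
      · rw [if_pos h0, norm_mul, norm_mul]
        have h1 : ‖Complex.exp (-(sqRoot a μ ℓ) * ((x:ℂ) - (R:ℂ)))‖ ≤ 1 := by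
          rw [Complex.norm_exp, Real.exp_le_one_iff]
          have : -(sqRoot a μ ℓ) * ((x:ℂ) - (R:ℂ))
              = -(sqRoot a μ ℓ) * (((x - R : ℝ)):ℂ) := by push_cast; ring
          rw [this, Complex.mul_re, Complex.ofReal_re, Complex.ofReal_im, mul_zero, sub_zero,
            Complex.neg_re]
          nlinarith [hsre ℓ h0]
        have h2 : ‖Complex.exp (2 * (π:ℂ) * Complex.I * (ℓ:ℂ) * (y:ℂ) / (a:ℂ))‖ = 1 := by
          rw [Complex.norm_exp]
          have : 2 * (π:ℂ) * Complex.I * (ℓ:ℂ) * (y:ℂ) / (a:ℂ)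
              = ((2 * π * (ℓ:ℝ) * y / a : ℝ) : ℂ) * Complex.I := by push_cast; ring
          rw [this]
          simp
        rw [h2, mul_one]
        calc ‖c ℓ‖ * ‖Complex.exp (-(sqRoot a μ ℓ) * ((x:ℂ) - (R:ℂ)))‖
            ≤ ‖c ℓ‖ * 1 := by gcongr
          _ = ‖c ℓ‖ := mul_one _
  · -- normal derivative
    intro y
    have hfx : (fun s => sepSol a R μ c s y)
        = fun t => ∑ ℓ ∈ insert 0 hc.toFinset,
            eTerm (coAx a c y ℓ) (coBx a μ ℓ) (coEx a R μ ℓ) t :=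
      funext fun t => sepSol_x_rep a R μ c hc y t
    have hzero : ∀ ℓ : ℤ, ℓ ∉ hc.toFinset → (if ℓ ≠ 0 then sqRoot a μ ℓ * c ℓ *
        Complex.exp (2 * (π:ℂ) * Complex.I * (ℓ:ℂ) * (y:ℂ) / (a:ℂ)) else 0) = 0 := by
      intro ℓ hℓ
      simp [support_zero c hc hℓ]
    simp only [mixedPartialDeriv, iteratedDeriv_zero]
    rw [hfx, model_iteratedDeriv_one, tsum_eq_sum hzero,
      ← Finset.add_sum_erase _
        (fun ℓ => eTerm (coBx a μ ℓ * coAx a c y ℓ) (coBx a μ ℓ) (coEx a R μ ℓ) R)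
        (Finset.mem_insert_self 0 hc.toFinset),
      Finset.erase_insert_eq_erase,
      ← Finset.sum_erase hc.toFinset (a := 0)
        (f := fun ℓ => if ℓ ≠ 0 then sqRoot a μ ℓ * c ℓ *
          Complex.exp (2 * (π:ℂ) * Complex.I * (ℓ:ℂ) * (y:ℂ) / (a:ℂ)) else 0)
        (by simp)]
    have hnn : ∀ ℓ ∈ hc.toFinset.erase 0,
        (if ℓ ≠ 0 then sqRoot a μ ℓ * c ℓ *
          Complex.exp (2 * (π:ℂ) * Complex.I * (ℓ:ℂ) * (y:ℂ) / (a:ℂ)) else 0)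
        = sqRoot a μ ℓ * c ℓ *
          Complex.exp (2 * (π:ℂ) * Complex.I * (ℓ:ℂ) * (y:ℂ) / (a:ℂ)) := by
      intro ℓ hℓ
      rw [if_pos (Finset.mem_erase.mp hℓ).1]
    rw [Finset.sum_congr rfl hnn, sub_eq_add_neg, ← Finset.sum_neg_distrib]
    congr 1
    · simp only [eTerm, coAx_zero, coBx_zero, coEx_zero]
      rw [show Complex.I * μ * (R:ℂ) + -(Complex.I * μ * (R:ℂ)) = 0 by ring,
        Complex.exp_zero, mul_one]
    · refine Finset.sum_congr rfl ?_
      intro ℓ hℓ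
      have h0 : ℓ ≠ 0 := (Finset.mem_erase.mp hℓ).1
      simp only [coAx, coBx, coEx, eTerm, if_neg h0]
      rw [show -(sqRoot a μ ℓ) * (R:ℂ) + sqRoot a μ ℓ * (R:ℂ) = 0 by ring,
        Complex.exp_zero, mul_one]
      ring
end

section
/- Let ε > 0, R ∈ ℝ, M > 0, and let μ ∈ ℂ with 0 < Im μ and |μ| < ε. Let f : [R, ∞) → ℂ be continuous with |f(x)| ≤ M e^{−εx} for all x ≥ R, and let u : [R, ∞) → ℂ be a bounded twice continuously differentiable function satisfying u''(x) + μ² u(x) = f(x) for all x ≥ R. Then there exist a constant C₀ ∈ ℂ and a constant M' > 0 such that |u(x) − C₀ e^{iμx}| ≤ M' e^{−εx} for all x ≥ R. -/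
open Set

namespace ResolventAux

open MeasureTheory Filter

/-- Derivative of `t ↦ exp (c t)` for real `t`, complex `c`. -/
lemma hasDerivAt_cexp_real (c : ℂ) (x : ℝ) :
    HasDerivAt (fun t : ℝ => Complex.exp (c * t)) (c * Complex.exp (c * x)) x := by
  have h1 : HasDerivAt (fun t : ℝ => (t : ℂ)) 1 x := Complex.ofRealCLM.hasDerivAt
  have h2 : HasDerivAt (fun t : ℝ => c * (t : ℂ)) c x := by
    simpa using h1.const_mul c
  simpa [mul_comm] using h2.cexp

lemma norm_cexp_real (c : ℂ) (x : ℝ) :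
    ‖Complex.exp (c * x)‖ = Real.exp (c.re * x) := by
  rw [Complex.norm_exp]
  congr 1
  simp [Complex.mul_re]

/-- value of the tail integral of a decaying exponential. -/
lemma integral_exp_neg_mul_Ioi {a : ℝ} (ha : 0 < a) (x : ℝ) :
    ∫ t in Ioi x, Real.exp (-a * t) = Real.exp (-a * x) / a := by
  have hderiv : ∀ t ∈ Ici x, HasDerivAt (fun t => -(Real.exp (-a * t) / a))
      (Real.exp (-a * t)) t := by
    intro t _
    have h := (((hasDerivAt_id t).const_mul (-a)).exp.div_const a).neg
    refine h.congr_deriv ?_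
    field_simp
    rfl
  have htend0 : Tendsto (fun t : ℝ => Real.exp (-a * t)) atTop (nhds 0) :=
    Real.tendsto_exp_atBot.comp (tendsto_id.const_mul_atTop_of_neg (by linarith))
  have htend : Tendsto (fun t => -(Real.exp (-a * t) / a)) atTop (nhds (-(0 / a))) :=
    (htend0.div_const a).neg
  have := integral_Ioi_of_hasDerivAt_of_tendsto' hderiv
    ((exp_neg_integrableOn_Ioi x ha)) htend
  rw [this]; ring

/-- Integrability of an exponentially decaying continuous function on a tail. -/
lemma integrableOn_tail {φ : ℝ → ℂ} {R a c : ℝ} (ha : 0 < a)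
    (hφ : ContinuousOn φ (Ici R)) (hbd : ∀ t, R ≤ t → ‖φ t‖ ≤ c * Real.exp (-a * t))
    {x : ℝ} (hx : R ≤ x) : IntegrableOn φ (Ioi x) := by
  refine Integrable.mono' ((exp_neg_integrableOn_Ioi x ha).const_mul c) ?_ ?_
  · exact (hφ.mono (fun t ht => le_trans hx (le_of_lt ht))).aestronglyMeasurable
      measurableSet_Ioi
  · filter_upwards [ae_restrict_mem measurableSet_Ioi] with t ht
    exact hbd t (le_trans hx (le_of_lt ht))

/-- Tail bound for the integral of an exponentially decaying function. -/
lemma norm_tail_integral_le {φ : ℝ → ℂ} {R a c : ℝ} (ha : 0 < a)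
    (hφ : ContinuousOn φ (Ici R)) (hbd : ∀ t, R ≤ t → ‖φ t‖ ≤ c * Real.exp (-a * t))
    {x : ℝ} (hx : R ≤ x) :
    ‖∫ t in Ioi x, φ t‖ ≤ c / a * Real.exp (-a * x) := by
  have h1 : ‖∫ t in Ioi x, φ t‖ ≤ ∫ t in Ioi x, c * Real.exp (-a * t) := by
    refine norm_integral_le_of_norm_le ((exp_neg_integrableOn_Ioi x ha).const_mul c) ?_
    filter_upwards [ae_restrict_mem measurableSet_Ioi] with t ht
    exact hbd t (le_trans hx (le_of_lt ht))
  have h2 : ∫ t in Ioi x, c * Real.exp (-a * t) = c / a * Real.exp (-a * x) := by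
    rw [MeasureTheory.integral_const_mul, integral_exp_neg_mul_Ioi ha]
    ring
  linarith [h1, h2.le]

/-- Splitting `∫_{(R,∞)} = ∫_{(R,x]} + ∫_{(x,∞)}`. -/
lemma interval_integral_eq_sub_tail {φ : ℝ → ℂ} {R a c : ℝ} (ha : 0 < a)
    (hφ : ContinuousOn φ (Ici R)) (hbd : ∀ t, R ≤ t → ‖φ t‖ ≤ c * Real.exp (-a * t))
    {x : ℝ} (hx : R ≤ x) :
    ∫ t in R..x, φ t = (∫ t in Ioi R, φ t) - ∫ t in Ioi x, φ t := by
  have hIoi : IntegrableOn φ (Ioi R) := integrableOn_tail ha hφ hbd le_rfl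
  have hIoc : IntegrableOn φ (Ioc R x) := hIoi.mono Ioc_subset_Ioi_self le_rfl
  have hIx : IntegrableOn φ (Ioi x) := integrableOn_tail ha hφ hbd hx
  have hsplit : (∫ t in Ioi R, φ t) = (∫ t in Ioc R x, φ t) + ∫ t in Ioi x, φ t := by
    rw [← MeasureTheory.setIntegral_union (Ioc_disjoint_Ioi le_rfl) measurableSet_Ioi
      hIoc hIx, Ioc_union_Ioi_eq_Ioi hx]
  rw [intervalIntegral.integral_of_le hx, hsplit]; ring

/-- FTC on `[R, x] ⊆ [R, ∞)` using one-sided derivatives. -/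
lemma ftc_Ici {F φ : ℝ → ℂ} {R x : ℝ} (hx : R ≤ x)
    (hF : ContinuousOn F (Ici R))
    (hd : ∀ t ∈ Ici R, HasDerivWithinAt F (φ t) (Ici R) t)
    (hφ : ContinuousOn φ (Ici R)) :
    ∫ t in R..x, φ t = F x - F R := by
  refine intervalIntegral.integral_eq_sub_of_hasDeriv_right_of_le hx
    (hF.mono (Icc_subset_Ici_self)) (fun t ht => ?_) ?_
  · exact (hd t (le_of_lt ht.1)).mono (Ioi_subset_Ici (le_of_lt ht.1))
  · exact (hφ.mono (by rw [uIcc_of_le hx]; exact Icc_subset_Ici_self)).intervalIntegrable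

end ResolventAux

open ResolventAux MeasureTheory Filter in
/-- One-dimensional asymptotics of the resolvent at a cylindrical end: if `u` is bounded and
twice continuously differentiable on `[R,∞)` with `u'' + μ²u = f`, where `Im μ > 0`,
`|μ| < ε` and `|f(x)| ≤ M e^{−εx}`, then `u(x) = C₀ e^{iμx} + O(e^{−εx})` on `[R,∞)`. -/
theorem resolvent_end_asymptotics
    (ε R M : ℝ) (hε : 0 < ε) (hM : 0 < M)
    (μ : ℂ) (hμim : 0 < μ.im) (hμabs : ‖μ‖ < ε)
    (f u : ℝ → ℂ)
    (hf_cont : ContinuousOn f (Ici R))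
    (hf_decay : ∀ x : ℝ, R ≤ x → ‖f x‖ ≤ M * Real.exp (-ε * x))
    (hu_smooth : ContDiffOn ℝ 2 u (Ici R))
    (hu_bdd : ∃ B : ℝ, ∀ x : ℝ, R ≤ x → ‖u x‖ ≤ B)
    (hODE : ∀ x : ℝ, R ≤ x → iteratedDerivWithin 2 u (Ici R) x + μ ^ 2 * u x = f x) :
    ∃ (C₀ : ℂ) (M' : ℝ), 0 < M' ∧ ∀ x : ℝ, R ≤ x →
      ‖u x - C₀ * Complex.exp (Complex.I * μ * (x : ℂ))‖ ≤ M' * Real.exp (-ε * x) := by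
  obtain ⟨B, hB⟩ := hu_bdd
  have hμne : μ ≠ 0 := fun h => by simp [h] at hμim
  set b : ℝ := μ.im with hb_def
  have hb : 0 < b := hμim
  have hbε : b < ε := lt_of_le_of_lt (le_trans (le_abs_self _) (Complex.abs_im_le_norm μ)) hμabs
  have hs : UniqueDiffOn ℝ (Ici R) := uniqueDiffOn_Ici R
  -- first derivative
  set g : ℝ → ℂ := derivWithin u (Ici R) with hg_def
  have hu1 : ContDiffOn ℝ 1 g (Ici R) := hu_smooth.derivWithin hs (by norm_num)
  have hu_diff : DifferentiableOn ℝ u (Ici R) := hu_smooth.differentiableOn (by norm_num)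
  have hud : ∀ t ∈ Ici R, HasDerivWithinAt u (g t) (Ici R) t :=
    fun t ht => (hu_diff t ht).hasDerivWithinAt
  have hg_diff : DifferentiableOn ℝ g (Ici R) := hu1.differentiableOn (by norm_num)
  set g2 : ℝ → ℂ := derivWithin g (Ici R) with hg2_def
  have hgd : ∀ t ∈ Ici R, HasDerivWithinAt g (g2 t) (Ici R) t :=
    fun t ht => (hg_diff t ht).hasDerivWithinAt
  have hg2_eq : ∀ t ∈ Ici R, g2 t = iteratedDerivWithin 2 u (Ici R) t := by
    intro t ht
    rw [iteratedDerivWithin_succ', iteratedDerivWithin_one]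
  have hu_cont : ContinuousOn u (Ici R) := hu_smooth.continuousOn
  have hg_cont : ContinuousOn g (Ici R) := hu1.continuousOn
  -- reduction of order
  set v : ℝ → ℂ := fun t => g t - Complex.I * μ * u t with hv_def
  have hv_cont : ContinuousOn v (Ici R) :=
    hg_cont.sub ((continuousOn_const).mul hu_cont)
  have hvd : ∀ t ∈ Ici R,
      HasDerivWithinAt v (g2 t - Complex.I * μ * g t) (Ici R) t :=
    fun t ht => (hgd t ht).sub ((hud t ht).const_mul (Complex.I * μ))
  -- the function φ = e^{iμt} f t
  set φ : ℝ → ℂ := fun t => Complex.exp (Complex.I * μ * t) * f t with hφ_def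
  have hIm_re : (Complex.I * μ).re = -b := by simp [Complex.mul_re, hb_def]
  have hnegIm_re : (-(Complex.I * μ)).re = b := by simp [Complex.mul_re, hb_def]
  have hφ_cont : ContinuousOn φ (Ici R) :=
    ((Complex.continuous_exp.comp (continuous_const.mul Complex.continuous_ofReal)).continuousOn).mul hf_cont
  have hφ_bd : ∀ t, R ≤ t → ‖φ t‖ ≤ M * Real.exp (-(ε + b) * t) := by
    intro t ht
    have h1 : ‖Complex.exp (Complex.I * μ * t)‖ = Real.exp (-b * t) := by
      rw [norm_cexp_real, hIm_re]
    calc ‖φ t‖ = Real.exp (-b * t) * ‖f t‖ := by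
          simp only [hφ_def, norm_mul, h1]
      _ ≤ Real.exp (-b * t) * (M * Real.exp (-ε * t)) := by
          exact mul_le_mul_of_nonneg_left (hf_decay t ht) (Real.exp_nonneg _)
      _ = M * Real.exp (-(ε + b) * t) := by
          rw [show -(ε + b) * t = -b * t + -ε * t by ring, Real.exp_add]; ring
  have hab : 0 < ε + b := by linarith
  -- FTC for P t = e^{iμt} v t
  set P : ℝ → ℂ := fun t => Complex.exp (Complex.I * μ * t) * v t with hP_def
  have hP_cont : ContinuousOn P (Ici R) :=
    ((Complex.continuous_exp.comp (continuous_const.mul Complex.continuous_ofReal)).continuousOn).mul hv_cont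
  have hPd : ∀ t ∈ Ici R, HasDerivWithinAt P (φ t) (Ici R) t := by
    intro t ht
    have h1 := ((hasDerivAt_cexp_real (Complex.I * μ) t).hasDerivWithinAt).mul (hvd t ht)
    have h2 : Complex.I * μ * Complex.exp (Complex.I * μ * t) * v t +
        Complex.exp (Complex.I * μ * t) * (g2 t - Complex.I * μ * g t) = φ t := by
      have hODE' : g2 t + μ ^ 2 * u t = f t := by rw [hg2_eq t ht]; exact hODE t ht
      have : Complex.I * μ * v t + (g2 t - Complex.I * μ * g t)
          = g2 t + μ ^ 2 * u t := by
        simp only [hv_def]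
        linear_combination (-(μ ^ 2 * u t)) * Complex.I_sq
      calc Complex.I * μ * Complex.exp (Complex.I * μ * t) * v t +
            Complex.exp (Complex.I * μ * t) * (g2 t - Complex.I * μ * g t)
          = Complex.exp (Complex.I * μ * t) *
            (Complex.I * μ * v t + (g2 t - Complex.I * μ * g t)) := by ring
        _ = Complex.exp (Complex.I * μ * t) * (g2 t + μ ^ 2 * u t) := by rw [this]
        _ = φ t := by rw [hODE']
    rw [← h2]; exact h1
  set K : ℂ := P R + ∫ t in Ioi R, φ t with hK_def
  set T : ℝ → ℂ := fun x => ∫ t in Ioi x, φ t with hT_def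
  have hP_eq : ∀ x, R ≤ x → P x = K - T x := by
    intro x hx
    have h1 := ftc_Ici hx hP_cont hPd hφ_cont
    have h2 := interval_integral_eq_sub_tail hab hφ_cont hφ_bd hx
    have hTx : T x = ∫ t in Ioi x, φ t := rfl
    rw [hK_def, hTx]
    linear_combination h2 - h1
  have hT_bd : ∀ x, R ≤ x → ‖T x‖ ≤ M / (ε + b) * Real.exp (-(ε + b) * x) :=
    fun x hx => norm_tail_integral_le hab hφ_cont hφ_bd hx
  -- v x = e^{-iμx} (K - T x)
  have hexp_ne : ∀ z : ℂ, Complex.exp z ≠ 0 := Complex.exp_ne_zero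
  have hv_eq : ∀ x, R ≤ x → v x = Complex.exp (-(Complex.I * μ) * x) * (K - T x) := by
    intro x hx
    have h : Complex.exp (Complex.I * μ * x) * v x = K - T x := hP_eq x hx
    have hmul : Complex.exp (-(Complex.I * μ) * x) * Complex.exp (Complex.I * μ * x) = 1 := by
      rw [← Complex.exp_add,
        show -(Complex.I * μ) * x + Complex.I * μ * x = 0 by ring, Complex.exp_zero]
    calc v x = (Complex.exp (-(Complex.I * μ) * x) * Complex.exp (Complex.I * μ * x)) * v x := by
          rw [hmul, one_mul]
      _ = Complex.exp (-(Complex.I * μ) * x) * (Complex.exp (Complex.I * μ * x) * v x) := by ring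
      _ = Complex.exp (-(Complex.I * μ) * x) * (K - T x) := by rw [h]
  -- second integration: Q t = e^{-iμt} u t, ψ = e^{-iμt} v t
  set ψ : ℝ → ℂ := fun t => Complex.exp (-(Complex.I * μ) * t) * v t with hψ_def
  have hψ_cont : ContinuousOn ψ (Ici R) :=
    ((Complex.continuous_exp.comp (continuous_const.mul Complex.continuous_ofReal)).continuousOn).mul hv_cont
  set Q : ℝ → ℂ := fun t => Complex.exp (-(Complex.I * μ) * t) * u t with hQ_def
  have hQ_cont : ContinuousOn Q (Ici R) :=
    ((Complex.continuous_exp.comp (continuous_const.mul Complex.continuous_ofReal)).continuousOn).mul hu_cont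
  have hQd : ∀ t ∈ Ici R, HasDerivWithinAt Q (ψ t) (Ici R) t := by
    intro t ht
    have h1 := ((hasDerivAt_cexp_real (-(Complex.I * μ)) t).hasDerivWithinAt).mul (hud t ht)
    have h2 : -(Complex.I * μ) * Complex.exp (-(Complex.I * μ) * t) * u t +
        Complex.exp (-(Complex.I * μ) * t) * g t = ψ t := by
      simp only [hψ_def, hv_def]; ring
    rw [← h2]; exact h1
  -- splitting ψ into the K-part and the decaying part χ
  set c2 : ℂ := -(2 * (Complex.I * μ)) with hc2_def
  have hc2_ne : c2 ≠ 0 := by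
    rw [hc2_def]
    intro h
    apply hμne
    have h0 := neg_eq_zero.mp h
    rcases mul_eq_zero.mp h0 with h' | h'
    · exact absurd h' two_ne_zero
    · rcases mul_eq_zero.mp h' with h'' | h''
      · exact absurd h'' Complex.I_ne_zero
      · exact h''
  set χ : ℝ → ℂ := fun t => -(Complex.exp (c2 * t) * T t) with hχ_def
  have hψ_eq : ∀ t, R ≤ t → ψ t = K * Complex.exp (c2 * t) + χ t := by
    intro t ht
    have hx2 : Complex.exp (c2 * t)
        = Complex.exp (-(Complex.I * μ) * t) * Complex.exp (-(Complex.I * μ) * t) := by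
      rw [← Complex.exp_add, hc2_def]; congr 1; ring
    simp only [hψ_def, hχ_def]
    rw [hv_eq t ht, hx2]; ring
  have hχ_cont : ContinuousOn χ (Ici R) := by
    have : ContinuousOn (fun t => ψ t - K * Complex.exp (c2 * t)) (Ici R) :=
      hψ_cont.sub (continuousOn_const.mul
        ((Complex.continuous_exp.comp (continuous_const.mul Complex.continuous_ofReal)).continuousOn))
    exact this.congr (fun t ht => by beta_reduce; rw [hψ_eq t ht]; ring)
  have haeb : 0 < ε - b := by linarith
  have hχ_bd : ∀ t, R ≤ t → ‖χ t‖ ≤ M / (ε + b) * Real.exp (-(ε - b) * t) := by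
    intro t ht
    have h1 : ‖Complex.exp (c2 * t)‖ = Real.exp (2 * b * t) := by
      rw [norm_cexp_real]
      congr 1
      rw [hc2_def]
      simp [Complex.mul_re, hb_def]
      try ring
    simp only [hχ_def, norm_neg, norm_mul, h1]
    calc Real.exp (2 * b * t) * ‖T t‖
        ≤ Real.exp (2 * b * t) * (M / (ε + b) * Real.exp (-(ε + b) * t)) :=
          mul_le_mul_of_nonneg_left (hT_bd t ht) (Real.exp_nonneg _)
      _ = M / (ε + b) * Real.exp (-(ε - b) * t) := by
          rw [show -(ε - b) * t = 2 * b * t + -(ε + b) * t by ring, Real.exp_add]; ring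
  -- FTC for Q
  have hQ_eq : ∀ x, R ≤ x → Q x - Q R = (∫ t in R..x, K * Complex.exp (c2 * t)) +
      ∫ t in R..x, χ t := by
    intro x hx
    have h1 := ftc_Ici hx hQ_cont hQd hψ_cont
    rw [← h1]
    rw [← intervalIntegral.integral_add]
    · apply intervalIntegral.integral_congr
      intro t ht
      rw [uIcc_of_le hx] at ht
      exact hψ_eq t ht.1
    · exact ((continuous_const.mul (Complex.continuous_exp.comp
        (continuous_const.mul Complex.continuous_ofReal))).intervalIntegrable R x)
    · exact (hχ_cont.mono (by rw [uIcc_of_le hx]; exact Icc_subset_Ici_self)).intervalIntegrable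
  have hKint : ∀ x, R ≤ x → (∫ t in R..x, K * Complex.exp (c2 * t))
      = K / c2 * Complex.exp (c2 * x) - K / c2 * Complex.exp (c2 * R) := by
    intro x hx
    have hder : ∀ t ∈ uIcc R x, HasDerivAt (fun t : ℝ => K / c2 * Complex.exp (c2 * t))
        (K * Complex.exp (c2 * t)) t := by
      intro t _
      have h := (hasDerivAt_cexp_real c2 t).const_mul (K / c2)
      refine h.congr_deriv ?_
      rw [← mul_assoc, div_mul_cancel₀ K hc2_ne]
    have := intervalIntegral.integral_eq_sub_of_hasDerivAt hder
      ((continuous_const.mul (Complex.continuous_exp.comp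
        (continuous_const.mul Complex.continuous_ofReal))).intervalIntegrable R x)
    rw [this]
  -- tail of χ
  set Tχ : ℝ → ℂ := fun x => ∫ t in Ioi x, χ t with hTχ_def
  have hTχ_bd : ∀ x, R ≤ x → ‖Tχ x‖ ≤ (M / (ε + b)) / (ε - b) * Real.exp (-(ε - b) * x) :=
    fun x hx => norm_tail_integral_le haeb hχ_cont hχ_bd hx
  have hχsplit : ∀ x, R ≤ x →
      (∫ t in R..x, χ t) = (∫ t in Ioi R, χ t) - Tχ x :=
    fun x hx => interval_integral_eq_sub_tail haeb hχ_cont hχ_bd hx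
  -- combined formula for u
  set A : ℂ := Q R - K / c2 * Complex.exp (c2 * R) + ∫ t in Ioi R, χ t with hA_def
  have hu_eq : ∀ x, R ≤ x →
      u x = A * Complex.exp (Complex.I * μ * x) + K / c2 * Complex.exp (-(Complex.I * μ) * x)
        - Complex.exp (Complex.I * μ * x) * Tχ x := by
    intro x hx
    have h1 := hQ_eq x hx
    rw [hKint x hx, hχsplit x hx] at h1
    have hmul : Complex.exp (Complex.I * μ * x) * Complex.exp (-(Complex.I * μ) * x) = 1 := by
      rw [← Complex.exp_add,
        show Complex.I * μ * x + -(Complex.I * μ) * x = 0 by ring, Complex.exp_zero]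
    have hQx : Q x = Complex.exp (-(Complex.I * μ) * x) * u x := rfl
    have h2 : u x = Complex.exp (Complex.I * μ * x) * Q x := by
      rw [hQx]
      calc u x = (Complex.exp (Complex.I * μ * x) * Complex.exp (-(Complex.I * μ) * x)) * u x := by
            rw [hmul, one_mul]
        _ = Complex.exp (Complex.I * μ * x) * (Complex.exp (-(Complex.I * μ) * x) * u x) := by ring
    have hc2x : Complex.exp (Complex.I * μ * x) * Complex.exp (c2 * x)
        = Complex.exp (-(Complex.I * μ) * x) := by
      rw [← Complex.exp_add, hc2_def]; congr 1; ring
    have hQxval : Q x = Q R + (K / c2 * Complex.exp (c2 * x) - K / c2 * Complex.exp (c2 * R))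
        + ((∫ t in Ioi R, χ t) - Tχ x) := by linear_combination h1
    rw [h2, hQxval, hA_def]
    rw [mul_add, mul_add, mul_sub, mul_sub]
    have e1 : Complex.exp (Complex.I * μ * x) * (K / c2 * Complex.exp (c2 * x))
        = K / c2 * Complex.exp (-(Complex.I * μ) * x) := by
      rw [← hc2x]; ring
    rw [e1]; ring
  -- show K = 0 using boundedness of u
  have hnorm_exp_pos : ∀ x : ℝ, ‖Complex.exp (Complex.I * μ * x)‖ = Real.exp (-b * x) := by
    intro x; rw [norm_cexp_real, hIm_re]
  have hnorm_exp_neg : ∀ x : ℝ, ‖Complex.exp (-(Complex.I * μ) * x)‖ = Real.exp (b * x) := by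
    intro x; rw [norm_cexp_real, hnegIm_re]
  have hK0 : K = 0 := by
    by_contra hK
    set D : ℝ := B + ‖A‖ * Real.exp (-b * R) + (M / (ε + b)) / (ε - b) * Real.exp (-(ε - b) * R) * Real.exp (-b * R) with hD_def
    have hbound : ∀ x, R ≤ x → ‖K / c2‖ * Real.exp (b * x) ≤ D := by
      intro x hx
      have h := hu_eq x hx
      have h2 : K / c2 * Complex.exp (-(Complex.I * μ) * x)
          = u x - A * Complex.exp (Complex.I * μ * x) + Complex.exp (Complex.I * μ * x) * Tχ x := by
        linear_combination -h
      have hn : ‖K / c2 * Complex.exp (-(Complex.I * μ) * x)‖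
          ≤ ‖u x‖ + ‖A‖ * ‖Complex.exp (Complex.I * μ * x)‖
            + ‖Complex.exp (Complex.I * μ * x)‖ * ‖Tχ x‖ := by
        rw [h2]
        calc ‖u x - A * Complex.exp (Complex.I * μ * x) + Complex.exp (Complex.I * μ * x) * Tχ x‖
            ≤ ‖u x - A * Complex.exp (Complex.I * μ * x)‖
              + ‖Complex.exp (Complex.I * μ * x) * Tχ x‖ := norm_add_le _ _
          _ ≤ ‖u x‖ + ‖A * Complex.exp (Complex.I * μ * x)‖
              + ‖Complex.exp (Complex.I * μ * x) * Tχ x‖ := by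
                have := norm_sub_le (u x) (A * Complex.exp (Complex.I * μ * x))
                linarith
          _ = ‖u x‖ + ‖A‖ * ‖Complex.exp (Complex.I * μ * x)‖
              + ‖Complex.exp (Complex.I * μ * x)‖ * ‖Tχ x‖ := by rw [norm_mul, norm_mul]
      rw [norm_mul, hnorm_exp_neg] at hn
      have hexp_le : Real.exp (-b * x) ≤ Real.exp (-b * R) :=
        Real.exp_le_exp.mpr (by nlinarith)
      have hTle : ‖Tχ x‖ ≤ (M / (ε + b)) / (ε - b) * Real.exp (-(ε - b) * x) := hTχ_bd x hx
      have hTexp : Real.exp (-(ε - b) * x) ≤ Real.exp (-(ε - b) * R) :=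
        Real.exp_le_exp.mpr (by nlinarith)
      have hCpos : (0:ℝ) ≤ (M / (ε + b)) / (ε - b) := by positivity
      have hApos : (0:ℝ) ≤ ‖A‖ := norm_nonneg _
      rw [hnorm_exp_pos] at hn
      have hTnn : (0:ℝ) ≤ ‖Tχ x‖ := norm_nonneg _
      have hexp_pos : (0:ℝ) < Real.exp (-b * x) := Real.exp_pos _
      have step1 : ‖A‖ * Real.exp (-b * x) ≤ ‖A‖ * Real.exp (-b * R) :=
        mul_le_mul_of_nonneg_left hexp_le hApos
      have step2 : Real.exp (-b * x) * ‖Tχ x‖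
          ≤ (M / (ε + b)) / (ε - b) * Real.exp (-(ε - b) * R) * Real.exp (-b * R) := by
        calc Real.exp (-b * x) * ‖Tχ x‖
            ≤ Real.exp (-b * x) * ((M / (ε + b)) / (ε - b) * Real.exp (-(ε - b) * x)) :=
              mul_le_mul_of_nonneg_left hTle hexp_pos.le
          _ ≤ Real.exp (-b * R) * ((M / (ε + b)) / (ε - b) * Real.exp (-(ε - b) * R)) := by
              apply mul_le_mul hexp_le (mul_le_mul_of_nonneg_left hTexp hCpos)
                (by positivity) (Real.exp_nonneg _)
          _ = (M / (ε + b)) / (ε - b) * Real.exp (-(ε - b) * R) * Real.exp (-b * R) := by ring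
      have := hB x hx
      rw [hD_def]; linarith
    -- but the LHS tends to infinity
    have hKc2 : (0:ℝ) < ‖K / c2‖ := by
      simp only [norm_pos_iff]
      exact div_ne_zero hK hc2_ne
    have htends : Tendsto (fun x : ℝ => ‖K / c2‖ * Real.exp (b * x)) atTop atTop := by
      apply Tendsto.const_mul_atTop hKc2
      exact Real.tendsto_exp_atTop.comp (tendsto_id.const_mul_atTop hb)
    obtain ⟨x, hx1, hx2⟩ := ((htends.eventually_gt_atTop D).and (eventually_ge_atTop R)).exists
    exact absurd (hbound x hx2) (not_le.mpr hx1)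
  -- conclusion
  refine ⟨A, (M / (ε + b)) / (ε - b) + 1, by positivity, fun x hx => ?_⟩
  have h := hu_eq x hx
  rw [hK0] at h
  simp only [zero_div, zero_mul, add_zero] at h
  have h2 : u x - A * Complex.exp (Complex.I * μ * x)
      = -(Complex.exp (Complex.I * μ * x) * Tχ x) := by linear_combination h
  rw [h2, norm_neg, norm_mul, hnorm_exp_pos]
  calc Real.exp (-b * x) * ‖Tχ x‖
      ≤ Real.exp (-b * x) * ((M / (ε + b)) / (ε - b) * Real.exp (-(ε - b) * x)) :=
        mul_le_mul_of_nonneg_left (hTχ_bd x hx) (Real.exp_nonneg _)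
    _ = (M / (ε + b)) / (ε - b) * Real.exp (-ε * x) := by
        rw [show -ε * x = -b * x + -(ε - b) * x by ring, Real.exp_add]; ring
    _ ≤ ((M / (ε + b)) / (ε - b) + 1) * Real.exp (-ε * x) := by
        have := Real.exp_nonneg (-ε * x); nlinarith
end
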